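/- For every p ∈ ℕ₀ and every n ∈ ℕ, one has H_n(−p, 2) = H_n(−p)·H_n(2) − B_p·H_n − C^{(p)}_1(n). -/

import Mathlib

/-- Extended multiple harmonic sum `H_n(k_1,…,k_r) = ∑_{n ≥ n_1 > ⋯ > n_r ≥ 1} 1/(n_1^{k_1} ⋯ n_r^{k_r})`,
with `H_n(∅) = 1`; the exponents may be arbitrary integers.  In particular `Hs n [-(p:ℤ)] = ∑_{m=1}^n m^p`
and `Hs n [1]` is the `n`-th harmonic number. -/
def Hs : ℕ → List ℤ → ℚ
  | _, [] => 1
  | n, k :: ks => ∑ m ∈ Finset.Icc 1 n, ((m : ℚ) ^ k)⁻¹ * Hs (m - 1) ks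

/-- The polynomial `C^{(p)}_{a_2,…,a_r}(x)`, where the list `a = [a_1, a_2, …, a_r]` is the *full*
subscript list including the leading `a_1 = 0` (so `Cpoly p [0]` is `C^{(p)}`, `Cpoly p [0,0]`
is `C^{(p)}_0`, `Cpoly p [0,1,2]` is `C^{(p)}_{1,2}`, …):
`C^{(p)}_{a_2,…,a_r}(x) = ∑_{j_1,…,j_r ≥ 0, j_1+⋯+j_r ≤ p-a_r}
  (∏_{i=1}^r binom(p+1-a_i-j_1-⋯-j_{i-1}, j_i) B_{j_i} / (p+1-a_i-j_1-⋯-j_{i-1}))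
    x^{p+1-a_r-j_1-⋯-j_r}`,
the zero polynomial if `p < a_r`, with `B_j = bernoulli' j`. -/
noncomputable def Cpoly (p : ℕ) (a : List ℕ) : Polynomial ℚ :=
  ∑ j ∈ Fintype.piFinset (fun _ : Fin a.length => Finset.range (p + 1)),
    if (∑ i, j i) + a.getLastD 0 ≤ p then
      Polynomial.C (∏ i : Fin a.length,
        ((p + 1 - a.get i - ∑ i' ∈ Finset.Iio i, j i').choose (j i) : ℚ) * bernoulli' (j i) /
          ((p + 1 - a.get i - ∑ i' ∈ Finset.Iio i, j i' : ℕ) : ℚ)) *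
        Polynomial.X ^ (p + 1 - a.getLastD 0 - ∑ i, j i)
    else 0

open Finset Polynomial

noncomputable def ccoef (p j : ℕ) : ℚ :=
  ((p + 1).choose j : ℚ) * bernoulli' j / ((p : ℚ) + 1)

lemma eval_C0 (p : ℕ) (x : ℚ) :
    (Cpoly p [0]).eval x = ∑ j ∈ range (p + 1), ccoef p j * x ^ (p + 1 - j) := by
  unfold Cpoly
  rw [eval_finset_sum]
  simp only [List.length_cons, List.length_nil, Nat.reduceAdd, Nat.zero_add]
  refine Finset.sum_nbij' (fun j => j 0) (fun a => fun _ => a) ?_ ?_ ?_ ?_ ?_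
  · intro j hj
    simpa using (Fintype.mem_piFinset.1 hj) 0
  · intro a ha
    simp [Fintype.mem_piFinset]; simpa using ha
  · intro j hj; funext i; fin_cases i; rfl
  · intro a ha; rfl
  · intro j hj
    have h : (∑ i, j i) = j 0 := by rw [Fin.sum_univ_one]
    have hmem := Fintype.mem_piFinset.1 hj 0
    rw [Finset.mem_range] at hmem
    have hle : (∑ i, j i) + ([0] : List ℕ).getLastD 0 ≤ p := by
      rw [h, show ([0] : List ℕ).getLastD 0 = 0 from rfl]; omega
    rw [if_pos hle]
    have hIio : Finset.Iio (0 : Fin 1) = ∅ := rfl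
    rw [eval_mul, eval_C, eval_pow, eval_X, Fin.prod_univ_one, hIio]
    simp only [Finset.sum_empty, h, show ([0] : List ℕ).getLastD 0 = 0 from rfl,
      show ([0] : List ℕ).get (0 : Fin 1) = 0 from rfl, Nat.sub_zero]
    rw [ccoef]
    push_cast
    ring

lemma Hs_succ (n : ℕ) (k : ℤ) (ks : List ℤ) :
    Hs (n + 1) (k :: ks) = Hs n (k :: ks) + (((n : ℚ) + 1) ^ k)⁻¹ * Hs n ks := by
  show (∑ m ∈ Finset.Icc (1:ℕ) (n + 1), ((m : ℚ) ^ k)⁻¹ * Hs (m - 1) ks) = _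
  rw [Finset.sum_Icc_succ_top (by omega)]
  push_cast
  rfl

lemma Hs_zero (k : ℤ) (ks : List ℤ) : Hs 0 (k :: ks) = 0 := by
  show (∑ m ∈ Finset.Icc (1:ℕ) 0, ((m : ℚ) ^ k)⁻¹ * Hs (m - 1) ks) = 0
  simp

lemma Hs_negpow (p n : ℕ) : Hs n [-(p : ℤ)] = (Cpoly p [0]).eval (n : ℚ) := by
  have h1 : Hs n [-(p : ℤ)] = ∑ m ∈ Finset.Icc 1 n, (m : ℚ) ^ p := by
    show (∑ m ∈ Finset.Icc (1:ℕ) n, (((m : ℚ)) ^ (-(p:ℤ)))⁻¹ * Hs (m-1) []) = _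
    refine Finset.sum_congr rfl fun m _ => ?_
    show ((m : ℚ) ^ (-(p:ℤ)))⁻¹ * 1 = _
    rw [zpow_neg, inv_inv, zpow_natCast, mul_one]
  rw [h1, eval_C0, ← Finset.Ico_add_one_right_eq_Icc, sum_Ico_pow]
  refine Finset.sum_congr rfl fun j _ => ?_
  rw [ccoef]; ring

lemma eval_C1 (p : ℕ) (x : ℚ) :
    (Cpoly p [0, 1]).eval x
      = ∑ j ∈ range p, ccoef p j * (Cpoly (p - 1 - j) [0]).eval x := by
  have key : (Cpoly p [0, 1]).eval x
      = ∑ j0 ∈ range (p + 1), ∑ j1 ∈ range (p + 1),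
          (if j0 + j1 + 1 ≤ p then
            ccoef p j0 * (((p - j0).choose j1 : ℚ) * bernoulli' j1 / ((p - j0 : ℕ) : ℚ)
              * x ^ (p - j0 - j1)) else 0) := by
    unfold Cpoly
    rw [eval_finset_sum]
    simp only [List.length_cons, List.length_nil, Nat.reduceAdd, Nat.zero_add]
    rw [← Finset.sum_product']
    refine Finset.sum_nbij' (fun j => (j 0, j 1)) (fun a => ![a.1, a.2]) ?_ ?_ ?_ ?_ ?_
    · intro j hj
      have h0 := Fintype.mem_piFinset.1 hj 0
      have h1 := Fintype.mem_piFinset.1 hj 1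
      simp [Finset.mem_product]; exact ⟨by simpa using h0, by simpa using h1⟩
    · intro a ha
      simp [Finset.mem_product] at ha
      rw [Fintype.mem_piFinset]
      intro i; fin_cases i <;> simp [ha.1, ha.2]
    · intro j hj; funext i; fin_cases i <;> rfl
    · intro a ha; rfl
    · intro j hj
      have hsum : (∑ i, j i) = j 0 + j 1 := by rw [Fin.sum_univ_two]
      have hI0 : Finset.Iio (0 : Fin 2) = ∅ := rfl
      have hI1 : Finset.Iio (1 : Fin 2) = {0} := rfl
      have hget : ([0,1] : List ℕ).getLastD 0 = 1 := rfl
      by_cases hc : j 0 + j 1 + 1 ≤ p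
      · rw [if_pos (by simp [hsum, hget]; omega), if_pos hc]
        rw [eval_mul, eval_C, eval_pow, eval_X, Fin.prod_univ_two]
        rw [hI0, hI1]
        simp only [Finset.sum_empty, Finset.sum_singleton, hsum, hget]
        have e1 : p + 1 - ([0,1] : List ℕ).get (0 : Fin 2) - 0 = p + 1 := rfl
        have e2 : p + 1 - ([0,1] : List ℕ).get (1 : Fin 2) - j 0 = p - j 0 := by
          show p + 1 - 1 - j 0 = p - j 0; omega
        have e3 : p + 1 - 1 - (j 0 + j 1) = p - j 0 - j 1 := by omega
        rw [e3]
        show ((p+1-([0,1]:List ℕ).get (0 : Fin 2) - 0).choose (j 0) : ℚ) * bernoulli' (j 0) /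
            ((p+1-([0,1]:List ℕ).get (0 : Fin 2) - 0 : ℕ) : ℚ) *
            (((p+1-([0,1]:List ℕ).get (1 : Fin 2) - j 0).choose (j 1) : ℚ) * bernoulli' (j 1) /
            ((p+1-([0,1]:List ℕ).get (1 : Fin 2) - j 0 : ℕ) : ℚ)) * x ^ (p - j 0 - j 1) = _
        rw [e1, e2, ccoef]
        push_cast
        ring
      · rw [if_neg (by simp [hsum, hget]; omega), if_neg hc, eval_zero]
  rw [key]
  rw [Finset.sum_range_succ]
  have hlast : (∑ j1 ∈ range (p + 1),
      (if p + j1 + 1 ≤ p then ccoef p p * (((p - p).choose j1 : ℚ) * bernoulli' j1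
        / ((p - p : ℕ) : ℚ) * x ^ (p - p - j1)) else 0)) = 0 := by
    refine Finset.sum_eq_zero fun j1 _ => by rw [if_neg (by omega)]
  rw [hlast, add_zero]
  refine Finset.sum_congr rfl fun j0 hj0 => ?_
  have hj0p : j0 < p := Finset.mem_range.1 hj0
  have hinner : ∀ j1 : ℕ, (j0 + j1 + 1 ≤ p) ↔ j1 ∈ range (p - j0) := by
    intro j1; simp [Finset.mem_range]; omega
  calc (∑ j1 ∈ range (p + 1),
        (if j0 + j1 + 1 ≤ p then ccoef p j0 * (((p - j0).choose j1 : ℚ) * bernoulli' j1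
          / ((p - j0 : ℕ) : ℚ) * x ^ (p - j0 - j1)) else 0))
      = ∑ j1 ∈ range (p + 1) ∩ range (p - j0),
          ccoef p j0 * (((p - j0).choose j1 : ℚ) * bernoulli' j1
            / ((p - j0 : ℕ) : ℚ) * x ^ (p - j0 - j1)) := by
        rw [← Finset.sum_ite_mem]
        exact Finset.sum_congr rfl fun j1 _ => if_congr (hinner j1) rfl rfl
    _ = ∑ j1 ∈ range (p - j0),
          ccoef p j0 * (((p - j0).choose j1 : ℚ) * bernoulli' j1
            / ((p - j0 : ℕ) : ℚ) * x ^ (p - j0 - j1)) := by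
        congr 1
        exact Finset.inter_eq_right.2 (Finset.range_subset_range.2 (by omega))
    _ = ccoef p j0 * (Cpoly (p - 1 - j0) [0]).eval x := by
        rw [eval_C0, Finset.mul_sum]
        have hq : p - 1 - j0 + 1 = p - j0 := by omega
        refine Finset.sum_congr (by rw [hq]) fun j1 hj1 => ?_
        have hcast : ((p - 1 - j0 : ℕ) : ℚ) + 1 = ((p - j0 : ℕ) : ℚ) := by
          exact_mod_cast congrArg (Nat.cast : ℕ → ℚ) hq
        have h2 : ccoef (p - 1 - j0) j1
            = ((p - j0).choose j1 : ℚ) * bernoulli' j1 / ((p - j0 : ℕ) : ℚ) := by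
          rw [ccoef, hq, hcast]
        rw [h2, show p - 1 - j0 + 1 - j1 = p - j0 - j1 by omega]

lemma C0_incr (q n : ℕ) :
    (Cpoly q [0]).eval ((n : ℚ) + 1) = (Cpoly q [0]).eval (n : ℚ) + ((n : ℚ) + 1) ^ q := by
  have h1 := Hs_negpow q (n + 1)
  have h3 := Hs_succ n (-(q : ℤ)) []
  have e1 : (((n : ℚ) + 1) ^ (-(q : ℤ)))⁻¹ = ((n : ℚ) + 1) ^ q := by
    rw [zpow_neg, inv_inv, zpow_natCast]
  have hnil : Hs n [] = 1 := rfl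
  rw [h3, hnil, e1, mul_one, Hs_negpow q n] at h1
  push_cast at h1
  linarith [h1]

lemma C1_incr (p n : ℕ) :
    (Cpoly p [0, 1]).eval ((n : ℚ) + 1) - (Cpoly p [0, 1]).eval (n : ℚ)
      = (Cpoly p [0]).eval ((n : ℚ) + 1) / ((n : ℚ) + 1) ^ 2
        - bernoulli' p / ((n : ℚ) + 1) := by
  have hx : ((n : ℚ) + 1) ≠ 0 := by positivity
  rw [eval_C1, eval_C1, ← Finset.sum_sub_distrib]
  rw [Finset.sum_congr rfl (fun j (hj : j ∈ range p) =>
    (by rw [C0_incr (p - 1 - j) n]; ring :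
      ccoef p j * (Cpoly (p - 1 - j) [0]).eval ((n : ℚ) + 1)
        - ccoef p j * (Cpoly (p - 1 - j) [0]).eval (n : ℚ)
        = ccoef p j * ((n : ℚ) + 1) ^ (p - 1 - j)))]
  rw [eval_C0, Finset.sum_range_succ]
  have hcp : ccoef p p = bernoulli' p := by
    rw [ccoef, Nat.choose_succ_self_right]
    have : ((p : ℚ) + 1) ≠ 0 := by positivity
    push_cast
    field_simp
  have hpp : p + 1 - p = 1 := by omega
  rw [hpp, pow_one, hcp, add_div, Finset.sum_div]
  have hB : bernoulli' p * ((n : ℚ) + 1) / ((n : ℚ) + 1) ^ 2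
      = bernoulli' p / ((n : ℚ) + 1) := by
    rw [pow_two]
    field_simp
  rw [hB, add_sub_cancel_right]
  refine Finset.sum_congr rfl fun j hj => ?_
  have hj' : j < p := Finset.mem_range.1 hj
  rw [show p + 1 - j = (p - 1 - j) + 2 by omega, pow_add]
  field_simp

lemma aux_main (p n : ℕ) :
    Hs n [-(p : ℤ), 2] =
      Hs n [-(p : ℤ)] * Hs n [2] - bernoulli' p * Hs n [1]
        - (Cpoly p [0, 1]).eval (n : ℚ) := by
  induction n with
  | zero =>
    have h0 : (Cpoly p [0, 1]).eval ((0 : ℕ) : ℚ) = 0 := by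
      rw [eval_C1]
      refine Finset.sum_eq_zero fun j _ => ?_
      rw [← Hs_negpow, Hs_zero, mul_zero]
    rw [Hs_zero, Hs_zero, Hs_zero, Hs_zero, h0]
    ring
  | succ n ih =>
    have e1 : (((n : ℚ) + 1) ^ (-(p : ℤ)))⁻¹ = ((n : ℚ) + 1) ^ p := by
      rw [zpow_neg, inv_inv, zpow_natCast]
    have e2 : (((n : ℚ) + 1) ^ (2 : ℤ))⁻¹ = (((n : ℚ) + 1) ^ (2 : ℕ))⁻¹ := by
      rw [show (2 : ℤ) = ((2 : ℕ) : ℤ) from rfl, zpow_natCast]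
    have e3 : (((n : ℚ) + 1) ^ (1 : ℤ))⁻¹ = ((n : ℚ) + 1)⁻¹ := by norm_num
    have hC0 : (Cpoly p [0]).eval ((n : ℚ) + 1) = Hs n [-(p : ℤ)] + ((n : ℚ) + 1) ^ p := by
      rw [C0_incr, ← Hs_negpow]
    have hC1 : (Cpoly p [0, 1]).eval (((n + 1 : ℕ)) : ℚ)
        = (Cpoly p [0, 1]).eval (n : ℚ)
          + ((Hs n [-(p : ℤ)] + ((n : ℚ) + 1) ^ p) / ((n : ℚ) + 1) ^ 2
            - bernoulli' p / ((n : ℚ) + 1)) := by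
      push_cast
      rw [← hC0, ← C1_incr]
      ring
    have hnil : Hs n [] = 1 := rfl
    rw [Hs_succ, Hs_succ, Hs_succ, Hs_succ, hC1, e1, e2, e3, hnil, ih]
    ring

/-- `H_n(−p,2) = H_n(−p)·H_n(2) − B_p·H_n − C^{(p)}_1(n)`. -/
theorem stmt_8 (p : ℕ) (n : ℕ) (hn : 0 < n) :
    Hs n [-(p : ℤ), 2] =
      Hs n [-(p : ℤ)] * Hs n [2] - bernoulli' p * Hs n [1]
        - (Cpoly p [0, 1]).eval (n : ℚ) := by
  exact aux_main p n
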